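/- If C > (66π+8)/(45π) · B², then for every integer k, C > (22(4k+1)π-8)/(15(4k+1)π) · B²; in other words, all Hopf bifurcations are subcritical. -/
import Mathlib


theorem subcritical_all (B C : ℝ)
    (h : C > (66 * Real.pi + 8) / (45 * Real.pi) * B ^ 2) :
    ∀ k : ℤ, C > (22 * (4 * k + 1) * Real.pi - 8) / (15 * (4 * k + 1) * Real.pi) * B ^ 2 := by
  intro k
  have hπ : (0:ℝ) < Real.pi := Real.pi_pos
  have hm : ((4 * k + 1 : ℤ) : ℝ) = 4 * (k:ℝ) + 1 := by push_cast; ring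
  have hcase : (4 * (k:ℝ) + 1) ≥ 1 ∨ (4 * (k:ℝ) + 1) ≤ -3 := by
    rcases le_or_gt 0 k with hk | hk
    · left
      have : (0:ℝ) ≤ (k:ℝ) := by exact_mod_cast hk
      linarith
    · right
      have hk' : k ≤ -1 := by omega
      have : (k:ℝ) ≤ -1 := by exact_mod_cast hk'
      linarith
  set m : ℝ := 4 * (k:ℝ) + 1 with hmdef
  have key : (22 * m * Real.pi - 8) / (15 * m * Real.pi) ≤ (66 * Real.pi + 8) / (45 * Real.pi) := by
    rcases hcase with hge | hle
    · rw [div_le_div_iff₀ (by nlinarith) (by nlinarith)]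
      nlinarith [sq_nonneg Real.pi]
    · have hneg : 15 * m * Real.pi < 0 := by nlinarith
      rw [div_le_iff_of_neg hneg, ← sub_nonneg]
      have : 22 * m * Real.pi - 8 - (66 * Real.pi + 8) / (45 * Real.pi) * (15 * m * Real.pi)
          = (22 * m * Real.pi - 8) - (66 * Real.pi + 8) * m / 3 := by
        field_simp
        ring
      rw [this]
      nlinarith
  calc (22 * m * Real.pi - 8) / (15 * m * Real.pi) * B ^ 2
      ≤ (66 * Real.pi + 8) / (45 * Real.pi) * B ^ 2 :=
        mul_le_mul_of_nonneg_right key (sq_nonneg B)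
    _ < C := h
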